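/- arXiv:1412.2803 — 7 statements merged into one kernel-verified Lean document; each statement's English description precedes it below -/
import Mathlib

section
/- Let $a_1, \dots, a_p$ be points in $\mathbb{Z}^d$ with pairwise distinct norms and $|a_i| \leq N$ for all $i$, and let $m \in [1,2]$. Then the $p \times p$ determinant $D$ with entries $D_{jk} = \frac{d^j \omega_{a_k}}{dm^j}(m)$, where $\omega_a(m) = \sqrt{|a|^4 + m}$, satisfies $|D| \geq C(p) N^{-3p^2 + p}$ for some constant $C(p) > 0$ depending only on $p$. -/
/-- Euclidean norm of an integer vector. -/
noncomputable def znorm {d : ℕ} (a : Fin d → ℤ) : ℝ :=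
  Real.sqrt (∑ i, ((a i : ℝ)) ^ 2)

lemma iterDeriv_sqrt (c : ℝ) (n : ℕ) :
    ∀ t : ℝ, 0 < c + t →
    iteratedDeriv n (fun s => Real.sqrt (c + s)) t
      = (∏ l ∈ Finset.range n, ((1:ℝ)/2 - l)) * (c + t) ^ ((1:ℝ)/2 - n) := by
  induction n with
  | zero =>
    intro t ht
    simp [iteratedDeriv_zero, Real.sqrt_eq_rpow]
  | succ n ih =>
    intro t ht
    rw [iteratedDeriv_succ]
    have hopen : IsOpen {s : ℝ | 0 < c + s} := isOpen_lt continuous_const (by continuity)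
    have hev : iteratedDeriv n (fun s => Real.sqrt (c + s)) =ᶠ[nhds t]
        fun s => (∏ l ∈ Finset.range n, ((1:ℝ)/2 - l)) * (c + s) ^ ((1:ℝ)/2 - n) := by
      filter_upwards [hopen.mem_nhds ht] with s hs using ih s hs
    rw [hev.deriv_eq]
    have hd : HasDerivAt (fun s => (c + s) ^ ((1:ℝ)/2 - n))
        (((1:ℝ)/2 - n) * (c + t) ^ ((1:ℝ)/2 - n - 1) * 1) t :=
      (Real.hasDerivAt_rpow_const (Or.inl ht.ne')).comp t ((hasDerivAt_id t).const_add c)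
    rw [(hd.const_mul _).deriv, Finset.prod_range_succ]
    have : (1:ℝ)/2 - n - 1 = 1/2 - (n+1 : ℕ) := by push_cast; ring
    rw [this]
    ring

lemma pair_bound_lt {N m Si Sj : ℝ} (hN : 1 ≤ N) (hm1 : 1 ≤ m) (hm2 : m ≤ 2)
    (hSi0 : 0 ≤ Si) (hgap : Si + 1 ≤ Sj) (hiN : Si ≤ N^2) (hjN : Sj ≤ N^2) :
    1/(9*N^6) ≤ (Si^2 + m)⁻¹ - (Sj^2 + m)⁻¹ := by
  have hyi : (0:ℝ) < Si^2 + m := by nlinarith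
  have hyj : (0:ℝ) < Sj^2 + m := by nlinarith
  rw [inv_sub_inv hyi.ne' hyj.ne']
  have h1 : Sj^2 + m - (Si^2 + m) = Sj^2 - Si^2 := by ring
  rw [h1, le_div_iff₀ (by positivity), div_mul_eq_mul_div, div_le_iff₀ (by positivity)]
  have hSj1 : 1 ≤ Sj := by nlinarith
  have hA : Sj ≤ Sj^2 - Si^2 := by nlinarith
  have hB : Si^2 + m ≤ 3*N^4 := by nlinarith
  have hC : Sj^2 + m ≤ 3*Sj^2 := by nlinarith
  have hN0 : (0:ℝ) < N := by linarith
  nlinarith [mul_le_mul hB hC (by positivity) (by positivity),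
    mul_le_mul hjN hA (by nlinarith) (by positivity),
    mul_pos hN0 (mul_pos hN0 hN0), pow_pos hN0 4, pow_pos hN0 6]

theorem stmt3 (p : ℕ) (hp : 1 ≤ p) :
    ∃ C > 0, ∀ (d : ℕ) (N : ℝ), 1 ≤ N → ∀ (a : Fin p → (Fin d → ℤ)),
      (∀ i j, i ≠ j → znorm (a i) ≠ znorm (a j)) →
      (∀ i, znorm (a i) ≤ N) →
      ∀ m ∈ Set.Icc (1:ℝ) 2,
      C * N ^ (-(3:ℝ) * (p : ℝ) ^ 2 + (p : ℝ)) ≤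
        |(Matrix.of fun j k : Fin p =>
            iteratedDeriv (j.1 + 1) (fun t => Real.sqrt (znorm (a k) ^ 4 + t)) m).det| := by
  classical
  -- the constant
  set Γ : Fin p → ℝ := fun j => ∏ l ∈ Finset.range (j.1+1), ((1:ℝ)/2 - l) with hΓ
  have hΓne : ∀ j : Fin p, Γ j ≠ 0 := by
    intro j
    apply Finset.prod_ne_zero_iff.mpr
    intro l _
    rcases Nat.eq_zero_or_pos l with h | h
    · subst h; norm_num
    · have h1 : (1:ℝ) ≤ l := by exact_mod_cast h
      intro hc; linarith
  set G : ℝ := |∏ j, Γ j| with hG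
  have hGpos : 0 < G := abs_pos.mpr (Finset.prod_ne_zero_iff.mpr fun j _ => hΓne j)
  set E : ℕ := ∑ i : Fin p, (Finset.Ioi i).card with hEdef
  have hE2 : (E:ℝ) * 2 = p * (p - 1) := by
    have h1 : E = ∑ i ∈ Finset.range p, (p - 1 - i) := by
      rw [hEdef, ← Fin.sum_univ_eq_sum_range fun i => p - 1 - i]
      exact Finset.sum_congr rfl fun i _ => Fin.card_Ioi i
    have h2 : ∑ i ∈ Finset.range p, (p - 1 - i) = ∑ i ∈ Finset.range p, i :=
      Finset.sum_range_reflect (fun i => i) p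
    have h3 : E * 2 = p * (p - 1) := by
      rw [h1, h2]; exact Finset.sum_range_id_mul_two p
    have := congrArg (fun n : ℕ => (n : ℝ)) h3
    push_cast [Nat.cast_sub hp] at this
    linarith
  refine ⟨G * ((Real.sqrt 3)⁻¹)^p * ((1:ℝ)/9)^E, by positivity, ?_⟩
  intro d N hN a hdist hle m hm
  obtain ⟨hm1, hm2⟩ := hm
  have hNpos : (0:ℝ) < N := by linarith
  -- the squared norms
  set T : Fin p → ℤ := fun k => ∑ i, (a k i)^2 with hT
  set S : Fin p → ℝ := fun k => ((T k : ℝ)) with hS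
  have hScast : ∀ k, S k = ∑ i, ((a k i : ℝ))^2 := by
    intro k; rw [hS, hT]; push_cast; ring
  have hS0 : ∀ k, 0 ≤ S k := by
    intro k; rw [hScast]; positivity
  have hSsq : ∀ k, znorm (a k) ^ 2 = S k := by
    intro k; rw [znorm, Real.sq_sqrt (by positivity), hScast]
  have hSN : ∀ k, S k ≤ N ^ 2 := by
    intro k
    rw [← hSsq]
    have h1 : 0 ≤ znorm (a k) := Real.sqrt_nonneg _
    nlinarith [hle k]
  have hTne : ∀ i j : Fin p, i ≠ j → T i ≠ T j := by
    intro i j hij he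
    apply hdist i j hij
    have hSij : S i = S j := by simp only [hS, he]
    rw [znorm, znorm, ← hScast i, ← hScast j, hSij]
  set y : Fin p → ℝ := fun k => S k ^ 2 + m with hy
  have hypos : ∀ k, 0 < y k := fun k => by
    have := hS0 k; show 0 < S k ^ 2 + m; nlinarith
  set x : Fin p → ℝ := fun k => (y k)⁻¹ with hx
  set w : Fin p → ℝ := fun k => (Real.sqrt (y k))⁻¹ with hw
  have hwnn : ∀ k, 0 ≤ w k := fun k => by rw [hw]; positivity
  -- rewrite the matrix entries
  have key : ∀ j k : Fin p,
      iteratedDeriv (j.1 + 1) (fun t => Real.sqrt (znorm (a k) ^ 4 + t)) m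
        = Γ j * (w k * x k ^ j.1) := by
    intro j k
    have hc : znorm (a k) ^ 4 = S k ^ 2 := by
      rw [← hSsq]; ring
    have hcm : 0 < znorm (a k) ^ 4 + m := by rw [hc]; nlinarith [hS0 k, sq_nonneg (S k)]
    rw [iterDeriv_sqrt _ _ m hcm, hc]
    have hyk := hypos k
    have e1 : S k ^ 2 + m = y k := rfl
    rw [e1]
    congr 1
    have e2 : (Real.sqrt (y k))⁻¹ * ((y k)⁻¹) ^ j.1
        = y k ^ (-(1/2) : ℝ) * y k ^ (-(j.1 : ℝ)) := by
      rw [Real.rpow_neg hyk.le, Real.rpow_neg hyk.le, Real.sqrt_eq_rpow,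
        Real.rpow_natCast, inv_pow]
    rw [hw, hx, e2, ← Real.rpow_add hyk]
    congr 1
    push_cast
    ring
  -- determinant factorization
  set A : Matrix (Fin p) (Fin p) ℝ :=
    Matrix.of (fun j k : Fin p => w k * ((Matrix.vandermonde x).transpose j k)) with hA
  have hmat : (Matrix.of fun j k : Fin p =>
      iteratedDeriv (j.1 + 1) (fun t => Real.sqrt (znorm (a k) ^ 4 + t)) m)
      = Matrix.of (fun j k : Fin p => Γ j * A j k) := by
    ext j k
    simp only [hA, Matrix.of_apply, Matrix.transpose_apply, Matrix.vandermonde_apply]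
    exact key j k
  have hdet : (Matrix.of fun j k : Fin p =>
      iteratedDeriv (j.1 + 1) (fun t => Real.sqrt (znorm (a k) ^ 4 + t)) m).det
      = (∏ j, Γ j) * ((∏ k, w k) *
          ∏ i : Fin p, ∏ j ∈ Finset.Ioi i, (x j - x i)) := by
    rw [hmat, Matrix.det_mul_column, hA, Matrix.det_mul_row, Matrix.det_transpose,
      Matrix.det_vandermonde]
  -- absolute value
  have habs : |(Matrix.of fun j k : Fin p =>
      iteratedDeriv (j.1 + 1) (fun t => Real.sqrt (znorm (a k) ^ 4 + t)) m).det|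
      = G * ((∏ k, w k) * ∏ i : Fin p, ∏ j ∈ Finset.Ioi i, |x j - x i|) := by
    rw [hdet, abs_mul, abs_mul, hG]
    congr 1
    congr 1
    · rw [Finset.abs_prod]
      exact Finset.prod_congr rfl fun k _ => abs_of_nonneg (hwnn k)
    · rw [Finset.abs_prod]
      exact Finset.prod_congr rfl fun i _ => Finset.abs_prod _ _
  rw [habs]
  -- lower bound for w
  have hW : ((Real.sqrt 3)⁻¹ * (N^2)⁻¹)^p ≤ ∏ k, w k := by
    have hone : ∀ k : Fin p, (Real.sqrt 3)⁻¹ * (N^2)⁻¹ ≤ w k := by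
      intro k
      have hyle : y k ≤ 3 * N^4 := by
        have h1 := hSN k; have h2 := hS0 k
        have h4 : S k ^ 2 ≤ N ^ 4 := by
          have := pow_le_pow_left₀ h2 h1 2
          nlinarith
        have h5 : (1:ℝ) ≤ N ^ 4 := by
          have := pow_le_pow_left₀ (by norm_num : (0:ℝ) ≤ 1) hN 4
          nlinarith
        show S k ^ 2 + m ≤ 3 * N ^ 4
        linarith
      have h1 : Real.sqrt (y k) ≤ Real.sqrt 3 * N^2 := by
        have : Real.sqrt (3 * N^4) = Real.sqrt 3 * N^2 := by
          rw [Real.sqrt_mul (by norm_num)]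
          congr 1
          rw [show N^4 = (N^2)^2 by ring, Real.sqrt_sq (by positivity)]
        rw [← this]
        exact Real.sqrt_le_sqrt hyle
      have h2 : 0 < Real.sqrt (y k) := Real.sqrt_pos.mpr (hypos k)
      rw [hw, ← mul_inv]
      exact inv_anti₀ h2 h1
    calc ((Real.sqrt 3)⁻¹ * (N^2)⁻¹)^p
        = ∏ _k : Fin p, (Real.sqrt 3)⁻¹ * (N^2)⁻¹ := by
          simp [Finset.prod_const]
      _ ≤ ∏ k, w k := Finset.prod_le_prod (fun k _ => by positivity) (fun k _ => hone k)
  -- lower bound for the Vandermonde part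
  have hV : ((1:ℝ)/(9*N^6))^E ≤ ∏ i : Fin p, ∏ j ∈ Finset.Ioi i, |x j - x i| := by
    have hone : ∀ i : Fin p, ∀ j ∈ Finset.Ioi i, (1:ℝ)/(9*N^6) ≤ |x j - x i| := by
      intro i j hj
      have hij : i ≠ j := (Finset.mem_Ioi.mp hj).ne
      have hTij := hTne i j hij
      rcases lt_or_gt_of_ne hTij with h | h
      · have hgap : S i + 1 ≤ S j := by
          show (T i : ℝ) + 1 ≤ (T j : ℝ); exact_mod_cast Int.add_one_le_iff.mpr h
        have := pair_bound_lt hN hm1 hm2 (hS0 i) hgap (hSN i) (hSN j)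
        calc (1:ℝ)/(9*N^6) ≤ x i - x j := this
          _ ≤ |x j - x i| := by rw [abs_sub_comm]; exact le_abs_self _
      · have hgap : S j + 1 ≤ S i := by
          show (T j : ℝ) + 1 ≤ (T i : ℝ); exact_mod_cast Int.add_one_le_iff.mpr h
        have := pair_bound_lt hN hm1 hm2 (hS0 j) hgap (hSN j) (hSN i)
        calc (1:ℝ)/(9*N^6) ≤ x j - x i := this
          _ ≤ |x j - x i| := le_abs_self _
    calc ((1:ℝ)/(9*N^6))^E
        = ∏ i : Fin p, ((1:ℝ)/(9*N^6))^(Finset.Ioi i).card := by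
          rw [Finset.prod_pow_eq_pow_sum, hEdef]
      _ = ∏ i : Fin p, ∏ _j ∈ Finset.Ioi i, (1:ℝ)/(9*N^6) := by
          exact Finset.prod_congr rfl fun i _ => (Finset.prod_const _).symm
      _ ≤ _ := Finset.prod_le_prod (fun i _ => by positivity)
            (fun i _ => Finset.prod_le_prod (fun j _ => by positivity) (hone i))
  -- exponent bookkeeping
  have hNr : N ^ (-(3:ℝ) * (p : ℝ) ^ 2 + (p : ℝ)) = ((N^2)⁻¹)^p * ((N^6)⁻¹)^E := by
    have e1 : ((N^2)⁻¹ : ℝ)^p = N ^ (-(2*(p:ℝ))) := by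
      rw [inv_pow, ← pow_mul, show (2*(p:ℝ)) = ((2*p : ℕ) : ℝ) by push_cast; ring,
        Real.rpow_neg hNpos.le, Real.rpow_natCast]
    have e2 : ((N^6)⁻¹ : ℝ)^E = N ^ (-(6*(E:ℝ))) := by
      rw [inv_pow, ← pow_mul, show (6*(E:ℝ)) = ((6*E : ℕ) : ℝ) by push_cast; ring,
        Real.rpow_neg hNpos.le, Real.rpow_natCast]
    rw [e1, e2, ← Real.rpow_add hNpos]
    congr 1
    nlinarith [hE2]
  calc G * ((Real.sqrt 3)⁻¹)^p * ((1:ℝ)/9)^E * N ^ (-(3:ℝ) * (p : ℝ) ^ 2 + (p : ℝ))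
      = G * (((Real.sqrt 3)⁻¹ * (N^2)⁻¹)^p * ((1:ℝ)/(9*N^6))^E) := by
        rw [hNr]; ring
    _ ≤ G * ((∏ k, w k) * ∏ i : Fin p, ∏ j ∈ Finset.Ioi i, |x j - x i|) := by
        apply mul_le_mul_of_nonneg_left _ hGpos.le
        exact mul_le_mul hW hV (by positivity)
          (Finset.prod_nonneg fun k _ => hwnn k)
end

section
/- Let $g$ be a $C^{n+1}$-smooth function on $[1,2]$ such that $\max_{1 \leq k \leq n} \min_{x \in [1,2]} |\partial^k g(x)| = \sigma > 0$ and $|g'|_{C^n} = \beta$. Then for every $\rho > 0$, $\operatorname{meas}\{x \in [1,2] : |g(x)| \leq \rho\} \leq C_n \left(\frac{\beta}{\sigma} + 1\right)\left(\frac{\rho}{\sigma}\right)^{1/n}$, where $C_n$ depends only on $n$. -/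
/-! Induction on the order `k` of the nondegenerate derivative. If `|f^(k+1)| ≥ σ`, the mean value
theorem confines `{|f^(k)| ≤ t}` to an interval of length `2t/σ`; on the at most two remaining
intervals `|f^(k)| ≥ t`, so the induction hypothesis applies there. The choice
`t = σ (ρ/σ)^(1/(k+1))` balances the two contributions and yields the bound `4^k (ρ/σ)^(1/k)`. -/

open Set MeasureTheory
open scoped ENNReal

theorem ContDiffOn.differentiableOn_iteratedDeriv_of_isOpen {𝕜 F : Type*}
    [NontriviallyNormedField 𝕜] [NormedAddCommGroup F] [NormedSpace 𝕜 F]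
    {f : 𝕜 → F} {s : Set 𝕜} {n : WithTop ℕ∞} {m : ℕ}
    (hf : ContDiffOn 𝕜 n f s) (hs : IsOpen s) (hm : m < n) :
    DifferentiableOn 𝕜 (iteratedDeriv m f) s :=
  (hf.differentiableOn_iteratedDerivWithin hm hs.uniqueDiffOn).congr
    fun _ hx => (iteratedDerivWithin_of_isOpen hs hx).symm

theorem mul_abs_sub_le_abs_sub_of_le_abs_deriv {f : ℝ → ℝ} {a b σ : ℝ}
    (hf : DifferentiableOn ℝ f (Ioo a b)) (hσ : ∀ x ∈ Ioo a b, σ ≤ |deriv f x|)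
    {x y : ℝ} (hx : x ∈ Ioo a b) (hy : y ∈ Ioo a b) :
    σ * |x - y| ≤ |f x - f y| := by
  wlog hxy : x < y generalizing x y
  · rcases (not_lt.mp hxy).eq_or_lt with rfl | hyx
    · simp
    · simpa only [abs_sub_comm] using this hy hx hyx
  have hsub : Icc x y ⊆ Ioo a b := Icc_subset_Ioo hx.1 hy.2
  obtain ⟨c, hc, hslope⟩ := exists_deriv_eq_slope f hxy (hf.continuousOn.mono hsub)
    (hf.mono (Ioo_subset_Icc_self.trans hsub))
  have hpos : 0 < y - x := sub_pos.mpr hxy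
  have hσc := hσ c (hsub (Ioo_subset_Icc_self hc))
  rw [hslope, abs_div, abs_of_pos hpos, le_div_iff₀ hpos] at hσc
  rwa [abs_sub_comm x, abs_of_pos hpos, abs_sub_comm]

theorem dist_le_of_abs_le_of_le_abs_deriv {f : ℝ → ℝ} {a b σ t : ℝ} (hσ : 0 < σ)
    (hf : DifferentiableOn ℝ f (Ioo a b)) (hder : ∀ x ∈ Ioo a b, σ ≤ |deriv f x|) :
    ∀ x ∈ Ioo a b ∩ {x | |f x| ≤ t}, ∀ y ∈ Ioo a b ∩ {x | |f x| ≤ t},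
      dist x y ≤ 2 * t / σ := by
  rintro x ⟨hx, hfx⟩ y ⟨hy, hfy⟩
  rw [Real.dist_eq, le_div_iff₀ hσ, mul_comm]
  calc σ * |x - y| ≤ |f x - f y| := mul_abs_sub_le_abs_sub_of_le_abs_deriv hf hder hx hy
    _ ≤ |f x| + |f y| := abs_sub _ _
    _ ≤ 2 * t := by rw [two_mul]; exact add_le_add hfx hfy

theorem volume_Ioo_inter_le_of_forall_dist_le {a b D : ℝ} {s A : Set ℝ} {B : ℝ≥0∞}
    (hA : A ⊆ Ioo a b) (hD : ∀ x ∈ A, ∀ y ∈ A, dist x y ≤ D)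
    (hB : ∀ a' b', Ioo a' b' ⊆ Ioo a b → Disjoint (Ioo a' b') A → volume (Ioo a' b' ∩ s) ≤ B) :
    volume (Ioo a b ∩ s) ≤ B + ENNReal.ofReal D + B := by
  rcases A.eq_empty_or_nonempty with rfl | hne
  · exact (hB a b subset_rfl (disjoint_empty _)).trans (le_self_add.trans le_self_add)
  have hbdd : Bornology.IsBounded A := Metric.isBounded_Ioo a b |>.subset hA
  have ha_inf : a ≤ sInf A := le_csInf hne fun x hx => (hA hx).1.le
  have hsup_b : sSup A ≤ b := csSup_le hne fun x hx => (hA hx).2.le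
  have hinf_sup : sInf A ≤ sSup A := csInf_le_csSup hne hbdd.bddBelow hbdd.bddAbove
  have hsup_sub_inf : sSup A - sInf A ≤ D := by
    obtain ⟨x, hx⟩ := hne
    rw [← Real.diam_eq hbdd]
    exact Metric.diam_le_of_forall_dist_le ((dist_self x).symm.trans_le (hD x hx x hx)) hD
  have hleft : Disjoint (Ioo a (sInf A)) A := disjoint_right.mpr fun x hx hx' =>
    (csInf_le hbdd.bddBelow hx).not_gt hx'.2
  have hright : Disjoint (Ioo (sSup A) b) A := disjoint_right.mpr fun x hx hx' =>
    (le_csSup hbdd.bddAbove hx).not_gt hx'.1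
  have hcover : Ioo a b ∩ s ⊆
      (Ioo a (sInf A) ∩ s) ∪ Icc (sInf A) (sSup A) ∪ (Ioo (sSup A) b ∩ s) := by
    rintro x ⟨hx, hxs⟩
    rcases lt_or_ge x (sInf A) with h₁ | h₁
    · exact Or.inl (Or.inl ⟨⟨hx.1, h₁⟩, hxs⟩)
    rcases le_or_gt x (sSup A) with h₂ | h₂
    · exact Or.inl (Or.inr ⟨h₁, h₂⟩)
    · exact Or.inr ⟨⟨h₂, hx.2⟩, hxs⟩
  calc volume (Ioo a b ∩ s)
      ≤ volume (Ioo a (sInf A) ∩ s) + volume (Icc (sInf A) (sSup A))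
        + volume (Ioo (sSup A) b ∩ s) :=
        (measure_mono hcover).trans <| (measure_union_le _ _).trans <|
          add_le_add_left (measure_union_le _ _) _
    _ ≤ B + ENNReal.ofReal D + B := by
      gcongr
      · exact hB _ _ (Ioo_subset_Ioo_right (hinf_sup.trans hsup_b)) hleft
      · rw [Real.volume_Icc]; exact ENNReal.ofReal_le_ofReal hsup_sub_inf
      · exact hB _ _ (Ioo_subset_Ioo_left (ha_inf.trans hinf_sup)) hright

theorem div_rpow_one_div_succ_rpow_one_div {r : ℝ} (hr : 0 < r) {k : ℕ} (hk : k ≠ 0) :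
    (r / r ^ ((1 : ℝ) / (k + 1))) ^ ((1 : ℝ) / k) = r ^ ((1 : ℝ) / (k + 1)) := by
  have hk' : (k : ℝ) ≠ 0 := Nat.cast_ne_zero.mpr hk
  have hsub : 1 - (1 : ℝ) / (k + 1) = k / (k + 1) := by field_simp; ring
  rw [← Real.rpow_one_sub' hr.le (by rw [hsub]; positivity), ← Real.rpow_mul hr.le, hsub]
  congr 1
  field_simp

theorem volume_sublevel_le_of_le_abs_iteratedDeriv {f : ℝ → ℝ} {k : ℕ} (hk : 1 ≤ k)
    {a b σ ρ : ℝ} (hσ : 0 < σ) (hρ : 0 < ρ) (hf : ContDiffOn ℝ k f (Ioo a b))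
    (hder : ∀ x ∈ Ioo a b, σ ≤ |iteratedDeriv k f x|) :
    volume (Ioo a b ∩ {x | |f x| ≤ ρ}) ≤ ENNReal.ofReal (4 ^ k * (ρ / σ) ^ ((1 : ℝ) / k)) := by
  induction k, hk using Nat.le_induction generalizing a b σ with
  | base =>
    rw [iteratedDeriv_one] at hder
    calc volume (Ioo a b ∩ {x | |f x| ≤ ρ}) ≤ Metric.ediam (Ioo a b ∩ {x | |f x| ≤ ρ}) :=
          Real.volume_le_diam _
      _ ≤ ENNReal.ofReal (2 * ρ / σ) := Metric.ediam_le_of_forall_dist_le <|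
          dist_le_of_abs_le_of_le_abs_deriv hσ (hf.differentiableOn one_ne_zero) hder
      _ ≤ ENNReal.ofReal (4 ^ 1 * (ρ / σ) ^ ((1 : ℝ) / (1 : ℕ))) := by
          gcongr
          rw [Nat.cast_one, div_one, Real.rpow_one, mul_div_assoc]
          linarith [div_pos hρ hσ]
  | succ k hk ih =>
    set X := (ρ / σ) ^ ((1 : ℝ) / (k + 1)) with hX
    have hX₀ : 0 < X := Real.rpow_pos_of_pos (div_pos hρ hσ) _
    rw [iteratedDeriv_succ] at hder
    have hdiff : DifferentiableOn ℝ (iteratedDeriv k f) (Ioo a b) :=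
      hf.differentiableOn_iteratedDeriv_of_isOpen isOpen_Ioo (by norm_cast; omega)
    calc volume (Ioo a b ∩ {x | |f x| ≤ ρ})
        ≤ ENNReal.ofReal (4 ^ k * X) + ENNReal.ofReal (2 * (σ * X) / σ)
          + ENNReal.ofReal (4 ^ k * X) := by
          refine volume_Ioo_inter_le_of_forall_dist_le inter_subset_left
            (dist_le_of_abs_le_of_le_abs_deriv hσ hdiff hder) fun a' b' hsub hdisj => ?_
          have hbound : ∀ x ∈ Ioo a' b', σ * X ≤ |iteratedDeriv k f x| := fun x hx =>
            le_of_not_ge fun hle => disjoint_left.mp hdisj hx ⟨hsub hx, hle⟩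
          have hih := ih (mul_pos hσ hX₀) ((hf.of_le (by norm_cast; omega)).mono hsub) hbound
          rwa [div_mul_eq_div_div, div_rpow_one_div_succ_rpow_one_div (div_pos hρ hσ)
            (by omega)] at hih
      _ ≤ ENNReal.ofReal (4 ^ (k + 1) * (ρ / σ) ^ ((1 : ℝ) / (k + 1 : ℕ))) := by
          rw [← ENNReal.ofReal_add (by positivity) (by positivity),
            ← ENNReal.ofReal_add (by positivity) (by positivity), Nat.cast_succ, ← hX,
            mul_div_assoc, mul_div_cancel_left₀ _ hσ.ne']
          gcongr
          nlinarith [one_le_pow₀ (M₀ := ℝ) (by norm_num : (1 : ℝ) ≤ 4) (n := k), pow_succ (4 : ℝ) k]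

theorem min_one_le_pow_mul_rpow_one_div {c r : ℝ} (hc : 1 ≤ c) (hr : 0 ≤ r) {k n : ℕ}
    (hk : 1 ≤ k) (hkn : k ≤ n) :
    min 1 (c ^ k * r ^ ((1 : ℝ) / k)) ≤ c ^ n * r ^ ((1 : ℝ) / n) := by
  rcases le_total r 1 with hr₁ | hr₁
  · have hk₀ : (0 : ℝ) < k := by exact_mod_cast hk
    refine (min_le_right _ _).trans (mul_le_mul (pow_le_pow_right₀ hc hkn) ?_ (by positivity)
      (by positivity))
    exact Real.rpow_le_rpow_of_exponent_ge' hr hr₁ (by positivity)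
      (one_div_le_one_div_of_le hk₀ (by exact_mod_cast hkn))
  · exact (min_le_left _ _).trans
      (one_le_mul_of_one_le_of_one_le (one_le_pow₀ hc) (Real.one_le_rpow hr₁ (by positivity)))

theorem stmt5_general (n : ℕ) :
    ∃ C > 0, ∀ (g : ℝ → ℝ) (σ β ρ : ℝ), 0 < σ → 0 < ρ →
      ContDiffOn ℝ (n + 1) g (Set.Icc 1 2) →
      (∃ k, 1 ≤ k ∧ k ≤ n ∧ ∀ x ∈ Set.Icc (1:ℝ) 2, σ ≤ |iteratedDeriv k g x|) →
      (∀ j ≤ n, ∀ x ∈ Set.Icc (1:ℝ) 2, |iteratedDeriv (j + 1) g x| ≤ β) →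
      MeasureTheory.volume {x ∈ Set.Icc (1:ℝ) 2 | |g x| ≤ ρ}
        ≤ ENNReal.ofReal (C * (β / σ + 1) * (ρ / σ) ^ ((1:ℝ) / n)) := by
  refine ⟨4 ^ n, by positivity, ?_⟩
  rintro g σ β ρ hσ hρ hg ⟨k, hk, hkn, hσk⟩ hβ
  have hβ₀ : 0 ≤ β := (abs_nonneg _).trans (hβ 0 n.zero_le 1 ⟨le_rfl, one_le_two⟩)
  have hvol₁ : volume (Ioo (1 : ℝ) 2 ∩ {x | |g x| ≤ ρ}) ≤ ENNReal.ofReal 1 :=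
    (measure_mono inter_subset_left).trans (by norm_num [Real.volume_Ioo])
  have hvolk := volume_sublevel_le_of_le_abs_iteratedDeriv hk hσ hρ
    ((hg.mono Ioo_subset_Icc_self).of_le (by norm_cast; omega))
    fun x hx => hσk x (Ioo_subset_Icc_self hx)
  -- At the endpoints `iteratedDeriv` sees `g` outside `Icc 1 2`, so we work on `Ioo 1 2`.
  calc volume {x ∈ Icc (1 : ℝ) 2 | |g x| ≤ ρ}
      = volume (Ioo (1 : ℝ) 2 ∩ {x | |g x| ≤ ρ}) :=
        measure_congr (Ioo_ae_eq_Icc.symm.inter Filter.EventuallyEq.rfl)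
    _ ≤ ENNReal.ofReal (min 1 (4 ^ k * (ρ / σ) ^ ((1 : ℝ) / k))) := by
        rw [ENNReal.ofReal_mono.map_min]
        exact le_min hvol₁ hvolk
    _ ≤ ENNReal.ofReal (4 ^ n * (β / σ + 1) * (ρ / σ) ^ ((1 : ℝ) / n)) := by
        refine ENNReal.ofReal_le_ofReal ((min_one_le_pow_mul_rpow_one_div (by norm_num)
          (div_pos hρ hσ).le hk hkn).trans ?_)
        rw [mul_right_comm]
        exact le_mul_of_one_le_right (by positivity) (by linarith [div_nonneg hβ₀ hσ.le])

theorem stmt5 (n : ℕ) (hn : 1 ≤ n) :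
    ∃ C > 0, ∀ (g : ℝ → ℝ) (σ β ρ : ℝ), 0 < σ → 0 < ρ →
      ContDiffOn ℝ (n + 1) g (Set.Icc 1 2) →
      (∃ k, 1 ≤ k ∧ k ≤ n ∧ ∀ x ∈ Set.Icc (1:ℝ) 2, σ ≤ |iteratedDeriv k g x|) →
      (∀ j ≤ n, ∀ x ∈ Set.Icc (1:ℝ) 2, |iteratedDeriv (j + 1) g x| ≤ β) →
      MeasureTheory.volume {x ∈ Set.Icc (1:ℝ) 2 | |g x| ≤ ρ}
        ≤ ENNReal.ofReal (C * (β / σ + 1) * (ρ / σ) ^ ((1:ℝ) / n)) :=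
  stmt5_general n
end

section
/- Let $L$ be an $N \times N$ complex matrix with eigenvalues $\lambda_1, \dots, \lambda_N$ satisfying $|\lambda_j - \lambda_k| \geq \delta > 0$ for all $j \neq k$, with corresponding unit eigenvectors $\xi_1, \dots, \xi_N$ forming the columns of a matrix $U$ (so that $U^{-1} L U = \operatorname{diag}(\lambda_1, \dots, \lambda_N)$). Then $\|U^{-1}\| \leq \sqrt{N}\,(2\delta^{-1}\|L\|)^{N-1}$, where $\|\cdot\|$ is the operator norm. -/
/-!
If `T` has unit eigenvectors `w k` with `δ`-separated eigenvalues `λ k`, the Lagrange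
interpolation polynomial `P_j` of the nodes `λ` satisfies `P_j(T) (∑ c k • w k) = c j • w j`, so
each coordinate is bounded by `‖P_j(T)‖ ≤ (2‖T‖/δ)^(N-1)` times the norm of the vector: each
factor `(T - λ l)/(λ j - λ l)` has norm at most `2‖T‖/δ` because `|λ l| ≤ ‖T‖`. Applied to
`y = U x`, where `U` has the columns `w k`, this bounds every coordinate of `x = U⁻¹ y`, and
the Euclidean norm costs a factor `√N`.
-/

/-- Operator norm of a complex matrix acting on Euclidean space. -/
noncomputable def opNorm {N : ℕ} (M : Matrix (Fin N) (Fin N) ℂ) : ℝ :=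
  ‖Matrix.toEuclideanCLM (𝕜 := ℂ) M‖

open Polynomial Finset

namespace ContinuousLinearMap

variable {𝕜 E : Type*} [NontriviallyNormedField 𝕜] [NormedAddCommGroup E] [NormedSpace 𝕜 E]

theorem norm_one_le : ‖(1 : E →L[𝕜] E)‖ ≤ 1 := norm_id_le

theorem coe_aeval (T : E →L[𝕜] E) (p : 𝕜[X]) :
    ((aeval T p : E →L[𝕜] E) : E →ₗ[𝕜] E) = aeval (T : E →ₗ[𝕜] E) p := by
  induction p using Polynomial.induction_on with
  | C a => ext; simp [Module.algebraMap_end_apply, algebraMap_apply]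
  | add p q hp hq => simp [hp, hq]
  | monomial n a h => simp_all [pow_succ, ← mul_assoc]

theorem aeval_apply_of_apply_eq_smul (T : E →L[𝕜] E) {μ : 𝕜} {v : E} (hv : T v = μ • v)
    (p : 𝕜[X]) : aeval T p v = p.eval μ • v := by
  rw [← coe_coe, coe_aeval]
  exact Module.End.aeval_apply_of_mem_apply_eq_smul hv

theorem norm_le_opNorm_of_apply_eq_smul {T : E →L[𝕜] E} {μ : 𝕜} {v : E} (hv : T v = μ • v)
    (hv0 : v ≠ 0) : ‖μ‖ ≤ ‖T‖ := by
  have h := T.le_opNorm v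
  rw [hv, norm_smul] at h
  exact le_of_mul_le_mul_right h (norm_pos_iff.mpr hv0)

theorem norm_sub_smul_one_le (T : E →L[𝕜] E) (μ : 𝕜) : ‖T - μ • 1‖ ≤ ‖T‖ + ‖μ‖ :=
  calc ‖T - μ • 1‖ ≤ ‖T‖ + ‖μ • (1 : E →L[𝕜] E)‖ := norm_sub_le _ _
    _ ≤ ‖T‖ + ‖μ‖ := by
      gcongr
      exact (norm_smul_le _ _).trans (mul_le_of_le_one_right (norm_nonneg _) norm_one_le)

theorem aeval_basisDivisor (T : E →L[𝕜] E) (x y : 𝕜) :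
    aeval T (Lagrange.basisDivisor x y) = (x - y)⁻¹ • (T - y • 1) := by
  simp [Lagrange.basisDivisor, Algebra.algebraMap_eq_smul_one]

theorem norm_aeval_basisDivisor_le (T : E →L[𝕜] E) (x y : 𝕜) :
    ‖aeval T (Lagrange.basisDivisor x y)‖ ≤ ‖x - y‖⁻¹ * (‖T‖ + ‖y‖) := by
  rw [aeval_basisDivisor, norm_smul, norm_inv]
  gcongr
  exact norm_sub_smul_one_le T y

theorem norm_aeval_prod_le {ι : Type*} (T : E →L[𝕜] E) (s : Finset ι) (p : ι → 𝕜[X]) {C : ℝ}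
    (h : ∀ i ∈ s, ‖aeval T (p i)‖ ≤ C) : ‖aeval T (∏ i ∈ s, p i)‖ ≤ C ^ #s := by
  classical
  induction s using Finset.induction_on with
  | empty => simpa using norm_one_le
  | insert a s ha ih =>
    rw [prod_insert ha, map_mul, card_insert_of_notMem ha, pow_succ']
    have ha' := h a (mem_insert_self a s)
    calc _ ≤ ‖aeval T (p a)‖ * ‖aeval T (∏ i ∈ s, p i)‖ := norm_mul_le _ _
      _ ≤ C * C ^ #s := by
        gcongr
        · exact (norm_nonneg _).trans ha'
        · exact ih fun i hi => h i (mem_insert_of_mem hi)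

theorem norm_aeval_lagrangeBasis_le {ι : Type*} [DecidableEq ι] (T : E →L[𝕜] E) {s : Finset ι}
    {v : ι → 𝕜} {δ : ℝ} (hδ : 0 < δ) (hsep : ∀ i ∈ s, ∀ j ∈ s, i ≠ j → δ ≤ ‖v i - v j‖)
    (hv : ∀ j ∈ s, ‖v j‖ ≤ ‖T‖) {i : ι} (hi : i ∈ s) :
    ‖aeval T (Lagrange.basis s v i)‖ ≤ (2 * δ⁻¹ * ‖T‖) ^ (#s - 1) := by
  rw [Lagrange.basis, ← card_erase_of_mem hi]
  refine norm_aeval_prod_le T _ _ fun j hj => ?_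
  obtain ⟨hji, hj⟩ := mem_erase.1 hj
  calc _ ≤ ‖v i - v j‖⁻¹ * (‖T‖ + ‖v j‖) := norm_aeval_basisDivisor_le T _ _
    _ ≤ δ⁻¹ * (‖T‖ + ‖T‖) := by
      gcongr
      · exact hsep i hi j hj hji.symm
      · exact hv j hj
    _ = 2 * δ⁻¹ * ‖T‖ := by ring

theorem aeval_lagrangeBasis_apply_sum_smul {ι : Type*} [Fintype ι] [DecidableEq ι] (T : E →L[𝕜] E)
    {lam : ι → 𝕜} (hlam : Function.Injective lam) {w : ι → E} (hw : ∀ k, T (w k) = lam k • w k)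
    (c : ι → 𝕜) (j : ι) : aeval T (Lagrange.basis univ lam j) (∑ k, c k • w k) = c j • w j := by
  simp_rw [map_sum, map_smul, aeval_apply_of_apply_eq_smul T (hw _)]
  rw [sum_eq_single j]
  · rw [Lagrange.eval_basis_self hlam.injOn (mem_univ j), one_smul]
  · intro k _ hkj
    rw [Lagrange.eval_basis_of_ne hkj.symm (mem_univ k), zero_smul, smul_zero]
  · exact fun h => absurd (mem_univ j) h

theorem norm_coeff_le_of_eigenvectors {ι : Type*} [Fintype ι] (T : E →L[𝕜] E) {lam : ι → 𝕜}
    {w : ι → E} (hw : ∀ k, T (w k) = lam k • w k) (hw1 : ∀ k, ‖w k‖ = 1) {δ : ℝ} (hδ : 0 < δ)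
    (hsep : ∀ j k, j ≠ k → δ ≤ ‖lam j - lam k‖) (c : ι → 𝕜) (j : ι) :
    ‖c j‖ ≤ (2 * δ⁻¹ * ‖T‖) ^ (Fintype.card ι - 1) * ‖∑ k, c k • w k‖ := by
  classical
  have hlam : Function.Injective lam := fun j k h => by
    by_contra hjk
    have := hsep j k hjk
    rw [h, sub_self, norm_zero] at this
    linarith
  have hlamT : ∀ k ∈ univ, ‖lam k‖ ≤ ‖T‖ := fun k _ =>
    norm_le_opNorm_of_apply_eq_smul (hw k) (norm_ne_zero_iff.mp (by simp [hw1]))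
  calc ‖c j‖ = ‖aeval T (Lagrange.basis univ lam j) (∑ k, c k • w k)‖ := by
        rw [aeval_lagrangeBasis_apply_sum_smul T hlam hw, norm_smul, hw1, mul_one]
    _ ≤ ‖aeval T (Lagrange.basis univ lam j)‖ * ‖∑ k, c k • w k‖ := le_opNorm _ _
    _ ≤ _ := by
      gcongr
      exact norm_aeval_lagrangeBasis_le T hδ (fun i _ k _ => hsep i k) hlamT (mem_univ j)

end ContinuousLinearMap

theorem EuclideanSpace.norm_le_sqrt_card_mul {ι 𝕜 : Type*} [Fintype ι] [RCLike 𝕜]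
    (x : EuclideanSpace 𝕜 ι) {C : ℝ} (hC : 0 ≤ C) (h : ∀ i, ‖x i‖ ≤ C) :
    ‖x‖ ≤ √(Fintype.card ι) * C := by
  calc ‖x‖ = √(∑ i, ‖x i‖ ^ 2) := EuclideanSpace.norm_eq x
    _ ≤ √(∑ _i : ι, C ^ 2) := by gcongr with i; exact h i
    _ = √(Fintype.card ι) * C := by
      rw [sum_const, card_univ, nsmul_eq_mul, Real.sqrt_mul (Nat.cast_nonneg _), Real.sqrt_sq hC]

namespace Matrix

variable {n 𝕜 : Type*} [Fintype n] [DecidableEq n] [RCLike 𝕜]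

theorem toEuclideanCLM_apply_eq_sum_smul_col (U : Matrix n n 𝕜) (x : EuclideanSpace 𝕜 n) :
    toEuclideanCLM (𝕜 := 𝕜) U x = ∑ k, x k • WithLp.toLp 2 (fun i => U i k) := by
  ext i
  simp [mulVec, dotProduct, mul_comm]

theorem norm_toEuclideanCLM_inv_le_of_eigenvectors (L : Matrix n n 𝕜) {lam : n → 𝕜}
    {ξ : n → n → 𝕜} (heig : ∀ j, L *ᵥ ξ j = lam j • ξ j)
    (hunit : ∀ j, ‖WithLp.toLp 2 (ξ j)‖ = 1) {δ : ℝ} (hδ : 0 < δ)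
    (hsep : ∀ j k, j ≠ k → δ ≤ ‖lam j - lam k‖) :
    ‖toEuclideanCLM (𝕜 := 𝕜) (of fun i j => ξ j i)⁻¹‖ ≤
      √(Fintype.card n) * (2 * δ⁻¹ * ‖toEuclideanCLM (𝕜 := 𝕜) L‖) ^ (Fintype.card n - 1) := by
  set U : Matrix n n 𝕜 := of fun i j => ξ j i
  set K := 2 * δ⁻¹ * ‖toEuclideanCLM (𝕜 := 𝕜) L‖
  by_cases hdet : IsUnit U.det
  · refine ContinuousLinearMap.opNorm_le_bound _ (by positivity) fun y => ?_
    set x := toEuclideanCLM (𝕜 := 𝕜) U⁻¹ y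
    have hy : y = toEuclideanCLM (𝕜 := 𝕜) U x := by
      rw [← mul_apply_eq_comp, ← map_mul, mul_nonsing_inv U hdet, map_one,
        one_apply_eq_self]
    have hT : ∀ k, toEuclideanCLM (𝕜 := 𝕜) L (WithLp.toLp 2 (ξ k)) =
        lam k • WithLp.toLp 2 (ξ k) := fun k => by rw [toEuclideanCLM_toLp, heig, WithLp.toLp_smul]
    calc ‖x‖ ≤ √(Fintype.card n) * (K ^ (Fintype.card n - 1) * ‖y‖) := by
          refine EuclideanSpace.norm_le_sqrt_card_mul x (by positivity) fun j => ?_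
          rw [hy, toEuclideanCLM_apply_eq_sum_smul_col]
          exact ContinuousLinearMap.norm_coeff_le_of_eigenvectors _ hT hunit hδ hsep x j
      _ = _ := by ring
  · rw [nonsing_inv_apply_not_isUnit U hdet, map_zero, norm_zero]
    positivity

end Matrix

theorem stmt11_general {N : ℕ} (L : Matrix (Fin N) (Fin N) ℂ)
    (lam : Fin N → ℂ) (ξ : Fin N → (Fin N → ℂ)) (δ : ℝ) (hδ : 0 < δ)
    (hsep : ∀ j k, j ≠ k → δ ≤ ‖lam j - lam k‖)
    (heig : ∀ j, L.mulVec (ξ j) = lam j • ξ j)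
    (hunit : ∀ j, ‖(WithLp.equiv 2 (Fin N → ℂ)).symm (ξ j)‖ = 1)
    (U : Matrix (Fin N) (Fin N) ℂ) (hU : U = Matrix.of fun i j => ξ j i) :
    opNorm U⁻¹ ≤ Real.sqrt N * (2 * δ⁻¹ * opNorm L) ^ (N - 1) := by
  subst hU
  simpa only [opNorm, Fintype.card_fin] using
    Matrix.norm_toEuclideanCLM_inv_le_of_eigenvectors L heig hunit hδ hsep

theorem stmt11 {N : ℕ} (hN : 1 ≤ N) (L : Matrix (Fin N) (Fin N) ℂ)
    (lam : Fin N → ℂ) (ξ : Fin N → (Fin N → ℂ)) (δ : ℝ) (hδ : 0 < δ)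
    (hsep : ∀ j k, j ≠ k → δ ≤ ‖lam j - lam k‖)
    (heig : ∀ j, L.mulVec (ξ j) = lam j • ξ j)
    (hunit : ∀ j, ‖(WithLp.equiv 2 (Fin N → ℂ)).symm (ξ j)‖ = 1)
    (U : Matrix (Fin N) (Fin N) ℂ) (hU : U = Matrix.of fun i j => ξ j i) :
    opNorm U⁻¹ ≤ Real.sqrt N * (2 * δ⁻¹ * opNorm L) ^ (N - 1) :=
  stmt11_general L lam ξ δ hδ hsep heig hunit U hU
end

section
/- Let $A_1, A_2$ be $N \times N$ complex matrices with $\|A_1\|, \|A_2\| \leq M$. Then the Hausdorff distance between the spectra of $A_1$ and $A_2$ is bounded by $C \|A_1 - A_2\|^{1/N}$, where $C$ depends only on $N$ and $M$. -/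
open Polynomial Nat
open scoped Matrix.Norms.L2Operator

theorem Polynomial.Splits.exists_mem_roots_norm_sub_pow_le {K : Type*} [NormedField K]
    {f : K[X]} (hf : f.Splits) (hm : f.Monic) (hdeg : 0 < f.natDegree) (a : K) :
    ∃ b ∈ f.roots, ‖a - b‖ ^ f.natDegree ≤ ‖f.eval a‖ := by
  have hcard : Multiset.card f.roots = f.natDegree := hf.natDegree_eq_card_roots.symm
  obtain ⟨b, hb, hmin⟩ := Multiset.exists_min_image (fun x ↦ ‖a - x‖)
    (Multiset.card_pos.mp (hcard ▸ hdeg))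
  refine ⟨b, hb, ?_⟩
  calc ‖a - b‖ ^ f.natDegree = (f.roots.map fun _ ↦ ‖a - b‖).prod := by
        rw [Multiset.map_const', Multiset.prod_replicate, hcard]
    _ ≤ (f.roots.map fun x ↦ ‖a - x‖).prod :=
        Multiset.prod_map_le_prod_map₀ _ _ (fun _ _ ↦ norm_nonneg _) hmin
    _ = ‖f.eval a‖ := by
        rw [hf.eval_eq_prod_roots_of_monic hm, ← normHom_apply, map_multiset_prod,
          Multiset.map_map]
        rfl

namespace Matrix

variable {n 𝕜 : Type*} [Fintype n] [DecidableEq n]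

theorem norm_det_le_factorial_mul_prod_norm_row [NormedCommRing 𝕜] [NormOneClass 𝕜]
    (A : Matrix n n 𝕜) : ‖A.det‖ ≤ (Fintype.card n)! * ∏ i, ‖A i‖ := by
  rw [det_apply]
  calc ‖∑ σ : Equiv.Perm n, Equiv.Perm.sign σ • ∏ i, A (σ i) i‖
      ≤ ∑ σ : Equiv.Perm n, ∏ i, ‖A (σ i)‖ := by
        refine (norm_sum_le _ _).trans (Finset.sum_le_sum fun σ _ ↦ ?_)
        rw [norm_units_zsmul]
        exact (Finset.norm_prod_le _ _).trans
          (Finset.prod_le_prod (fun _ _ ↦ norm_nonneg _) fun i _ ↦ norm_le_pi_norm (A (σ i)) i)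
    _ = (Fintype.card n)! * ∏ i, ‖A i‖ := by
        simp only [Equiv.prod_comp _ fun i ↦ ‖A i‖, Finset.sum_const, Finset.card_univ,
          Fintype.card_perm, nsmul_eq_mul]

theorem norm_det_sub_det_le [NontriviallyNormedField 𝕜] {A B : Matrix n n 𝕜} {R ε : ℝ}
    (hA : ∀ i j, ‖A i j‖ ≤ R) (hB : ∀ i j, ‖B i j‖ ≤ R) (hAB : ∀ i j, ‖A i j - B i j‖ ≤ ε) :
    ‖A.det - B.det‖ ≤ (Fintype.card n)! * Fintype.card n * R ^ (Fintype.card n - 1) * ε := by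
  rcases isEmpty_or_nonempty n with hn | hn
  · simp
  set a : n → n → 𝕜 := fun i ↦ A i
  set b : n → n → 𝕜 := fun i ↦ B i
  have hR : max ‖a‖ ‖b‖ ≤ R := by
    simp only [max_le_iff, pi_norm_le_iff_of_nonempty]
    exact ⟨hA, hB⟩
  have hε : ‖a - b‖ ≤ ε := by
    simp only [pi_norm_le_iff_of_nonempty]
    exact hAB
  calc ‖A.det - B.det‖
      ≤ (Fintype.card n)! * Fintype.card n * max ‖a‖ ‖b‖ ^ (Fintype.card n - 1) * ‖a - b‖ :=
        (detRowAlternating : (n → 𝕜) [⋀^n]→ₗ[𝕜] 𝕜).toMultilinearMap.norm_image_sub_le_of_bound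
          (by positivity) norm_det_le_factorial_mul_prod_norm_row a b
    _ ≤ _ := by
        have hR0 : 0 ≤ R := (norm_nonneg _).trans ((le_max_left _ _).trans hR)
        gcongr

theorem norm_entry_le_l2_opNorm {m : Type*} [Fintype m] [RCLike 𝕜] (A : Matrix m n 𝕜)
    (i : m) (j : n) : ‖A i j‖ ≤ ‖A‖ := by
  have h := A.l2_opNorm_mulVec (EuclideanSpace.single j 1)
  rw [PiLp.norm_single, norm_one, mul_one] at h
  refine le_trans (le_of_eq ?_) ((PiLp.norm_apply_le _ i).trans h)
  simp [mulVec_single]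

theorem exists_mem_spectrum_norm_sub_pow_le [Nonempty n] {A B : Matrix n n ℂ} {M : ℝ}
    (hA : ‖A‖ ≤ M) (hB : ‖B‖ ≤ M) {ν : ℂ} (hν : ν ∈ spectrum ℂ B) :
    ∃ μ ∈ spectrum ℂ A, ‖ν - μ‖ ^ Fintype.card n ≤
      (Fintype.card n)! * Fintype.card n * (2 * M) ^ (Fintype.card n - 1) * ‖A - B‖ := by
  have hνM : ‖ν‖ ≤ M := (spectrum.norm_le_norm_of_mem hν).trans hB
  have hentry (C : Matrix n n ℂ) (hC : ‖C‖ ≤ M) (i j : n) : ‖(scalar n ν - C) i j‖ ≤ 2 * M :=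
    calc ‖(scalar n ν - C) i j‖ ≤ ‖algebraMap ℂ (Matrix n n ℂ) ν - C‖ :=
          norm_entry_le_l2_opNorm _ i j
      _ ≤ ‖ν‖ + ‖C‖ := by rw [← norm_algebraMap' (Matrix n n ℂ) ν]; exact norm_sub_le _ _
      _ ≤ 2 * M := by linarith
  have hdiff (i j : n) : ‖(scalar n ν - A) i j - (scalar n ν - B) i j‖ ≤ ‖A - B‖ := by
    rw [← sub_apply, sub_sub_sub_cancel_left, norm_sub_rev]
    exact norm_entry_le_l2_opNorm _ i j
  have heval : A.charpoly.eval ν = (scalar n ν - A).det - (scalar n ν - B).det := by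
    rw [← eval_charpoly, ← eval_charpoly, (mem_spectrum_iff_isRoot_charpoly.mp hν).eq_zero,
      sub_zero]
  have hdeg : A.charpoly.natDegree = Fintype.card n := charpoly_natDegree_eq_dim A
  obtain ⟨μ, hμ, hle⟩ := (IsAlgClosed.splits A.charpoly).exists_mem_roots_norm_sub_pow_le
    A.charpoly_monic (hdeg ▸ Fintype.card_pos) ν
  refine ⟨μ, mem_spectrum_iff_isRoot_charpoly.mpr (isRoot_of_mem_roots hμ), ?_⟩
  rw [hdeg, heval] at hle
  exact hle.trans (norm_det_sub_det_le (hentry A hA) (hentry B hB) hdiff)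

end Matrix

theorem stmt12 (N : ℕ) (hN : 1 ≤ N) (M : ℝ) (hM : 0 < M) :
    ∃ C > 0, ∀ (A₁ A₂ : Matrix (Fin N) (Fin N) ℂ),
      opNorm A₁ ≤ M → opNorm A₂ ≤ M →
      (∀ μ ∈ spectrum ℂ A₁, ∃ ν ∈ spectrum ℂ A₂,
          ‖μ - ν‖ ≤ C * opNorm (A₁ - A₂) ^ ((1:ℝ) / N)) ∧
      (∀ ν ∈ spectrum ℂ A₂, ∃ μ ∈ spectrum ℂ A₁,
          ‖ν - μ‖ ≤ C * opNorm (A₁ - A₂) ^ ((1:ℝ) / N)) := by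
  have : Nonempty (Fin N) := ⟨⟨0, hN⟩⟩
  set K : ℝ := N ! * N * (2 * M) ^ (N - 1)
  have hK : 0 < K := by positivity
  have root {x ε : ℝ} (hx : 0 ≤ x) (hε : 0 ≤ ε) (h : x ^ N ≤ K * ε) :
      x ≤ K ^ ((1:ℝ) / N) * ε ^ ((1:ℝ) / N) := by
    rw [← Real.mul_rpow hK.le hε, one_div, Real.le_rpow_inv_iff_of_pos hx (by positivity)
      (by positivity), Real.rpow_natCast]
    exact h
  -- `opNorm A` is definitionally `‖A‖` for the scoped L2 operator norm (`Matrix.cstar_norm_def`).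
  refine ⟨K ^ ((1:ℝ) / N), by positivity, fun A₁ A₂ h₁ h₂ ↦ ⟨fun μ hμ ↦ ?_, fun ν hν ↦ ?_⟩⟩
  · obtain ⟨ν, hν, hle⟩ := Matrix.exists_mem_spectrum_norm_sub_pow_le h₂ h₁ hμ
    rw [norm_sub_rev A₂, Fintype.card_fin] at hle
    exact ⟨ν, hν, root (norm_nonneg _) (norm_nonneg _) hle⟩
  · obtain ⟨μ, hμ, hle⟩ := Matrix.exists_mem_spectrum_norm_sub_pow_le h₁ h₂ hν
    rw [Fintype.card_fin] at hle
    exact ⟨μ, hμ, root (norm_nonneg _) (norm_nonneg _) hle⟩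
end

section
/- Let $F$ be a nontrivial real polynomial of degree $\bar{d}$ in $n$ variables, restricted to a bounded domain $K \subset \mathbb{R}^n$ with piecewise smooth boundary. Then there exists a constant $C_F > 0$ such that for every $\varepsilon \in (0,1]$, $\operatorname{meas}\{x \in K : |F(x)| < \varepsilon\} \leq C_F \varepsilon^{1/\bar{d}}$. -/
open MeasureTheory Bornology
open scoped ENNReal

/-!
Let `d` be the total degree of `F` and pick `v` with `F_d(v) ≠ 0`, where `F_d` is the top
homogeneous component. On every line `t ↦ a + t • v` the restriction of `F` is a polynomial in `t`
of degree at most `d` with `t ^ d`-coefficient `c = F_d(v)`. Factoring it over `ℂ`, the points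
where it is smaller than `|c| r ^ d` lie within `r` of the real parts of its at most `d` roots, a
set of length at most `2 d r`. A linear change of variables taking a coordinate axis to the
direction `v`, followed by Fubini over the (bounded) projection of `K`, bounds the measure of
`{x ∈ K | |F x| < |c| r ^ d}` by `C r`; finally take `r = (ε / |c|) ^ (1 / d)`.
-/

namespace Polynomial

theorem volume_abs_eval_lt_le (q : ℝ[X]) {r : ℝ} (hr : 0 ≤ r) :
    volume {t | |q.eval t| < |q.leadingCoeff| * r ^ q.natDegree}
      ≤ ENNReal.ofReal (2 * q.natDegree * r) := by
  have hsplit : (q.map (algebraMap ℝ ℂ)).Splits := IsAlgClosed.splits _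
  have hcard : Multiset.card (q.aroots ℂ) = q.natDegree := by
    rw [aroots, ← hsplit.natDegree_eq_card_roots, natDegree_map]
  have hcover : {t | |q.eval t| < |q.leadingCoeff| * r ^ q.natDegree}
      ⊆ ⋃ z ∈ (q.aroots ℂ).toFinset, Metric.ball z.re r := by
    intro t ht
    -- away from the real parts of the complex roots, every linear factor of `q` has size `≥ r`
    by_contra hfar
    simp only [Set.mem_iUnion, Metric.mem_ball, Real.dist_eq, Multiset.mem_toFinset, not_exists,
      not_lt] at hfar
    refine (show |q.eval t| < _ from ht).not_ge ?_
    calc |q.leadingCoeff| * r ^ q.natDegree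
        = |q.leadingCoeff| * ((q.aroots ℂ).map fun _ => r).prod := by simp [hcard]
      _ ≤ |q.leadingCoeff| * ((q.aroots ℂ).map fun z => ‖(t : ℂ) - z‖).prod := by
        gcongr
        refine Multiset.prod_map_le_prod_map₀ _ _ (fun _ _ => hr) fun z hz => ?_
        exact (hfar z hz).trans (by simpa using Complex.abs_re_le_norm ((t : ℂ) - z))
      _ = ‖q.aeval (t : ℂ)‖ := by
        rw [hsplit.aeval_eq_prod_aroots, norm_mul,
          show ∀ s : Multiset ℂ, ‖s.prod‖ = (s.map (‖·‖)).prod from map_multiset_prod normHom,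
          Multiset.map_map]
        simp
      _ = |q.eval t| := by
        rw [← Complex.coe_algebraMap, aeval_algebraMap_apply_eq_algebraMap_eval]
        simp
  calc volume {t | |q.eval t| < |q.leadingCoeff| * r ^ q.natDegree}
      ≤ ∑ z ∈ (q.aroots ℂ).toFinset, volume (Metric.ball z.re r) :=
        (measure_mono hcover).trans (measure_biUnion_finset_le _ _)
    _ = (q.aroots ℂ).toFinset.card * ENNReal.ofReal (2 * r) := by simp [Real.volume_ball]
    _ ≤ q.natDegree * ENNReal.ofReal (2 * r) := by
        gcongr
        exact_mod_cast (Multiset.toFinset_card_le _).trans hcard.le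
    _ = ENNReal.ofReal (2 * q.natDegree * r) := by
        rw [← ENNReal.ofReal_natCast, ← ENNReal.ofReal_mul (by positivity)]
        ring_nf

theorem volume_abs_eval_lt_coeff_le {q : Polynomial ℝ} {d : ℕ} (hq : q.natDegree ≤ d)
    {r : ℝ} (hr : 0 ≤ r) :
    volume {t | |q.eval t| < |q.coeff d| * r ^ d} ≤ ENNReal.ofReal (2 * d * r) := by
  by_cases hqd : q.coeff d = 0
  · have hempty : {t | |q.eval t| < |q.coeff d| * r ^ d} = ∅ :=
      Set.eq_empty_of_forall_notMem fun t ht => (abs_nonneg _).not_gt (by simpa [hqd] using ht)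
    simp [hempty]
  · have hnat : q.natDegree = d := natDegree_eq_of_le_of_coeff_ne_zero hq hqd
    simpa [← hnat] using q.volume_abs_eval_lt_le hr

end Polynomial

section

variable {ι K : Type*} [Fintype ι] [DecidableEq ι] [Field K]

noncomputable def replaceSingleEquiv (v : ι → K) (i : ι) (hv : v i ≠ 0) : (ι → K) ≃ₗ[K] (ι → K) :=
  LinearEquiv.ofInjectiveEndo
    (LinearMap.id + (LinearMap.proj i).smulRight (v - Pi.single i 1)) <| by
    rw [← LinearMap.ker_eq_bot, LinearMap.ker_eq_bot']
    intro x hx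
    have hxi : x i = 0 := by
      have := congr_fun hx i
      simp only [LinearMap.add_apply, LinearMap.id_apply, LinearMap.smulRight_apply,
        LinearMap.proj_apply, Pi.add_apply, Pi.smul_apply, Pi.sub_apply, Pi.single_eq_same,
        smul_eq_mul, Pi.zero_apply] at this
      exact (mul_eq_zero.mp (by linear_combination this)).resolve_right hv
    simpa [hxi] using hx

theorem replaceSingleEquiv_single (v : ι → K) (i : ι) (hv : v i ≠ 0) (t : K) :
    replaceSingleEquiv v i hv (Pi.single i t) = t • v := by
  have : t • (Pi.single i 1 : ι → K) = Pi.single i t := by simp [← Pi.single_smul]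
  simp [replaceSingleEquiv, smul_sub, this]

end

theorem Finsupp.prod_pow_eq_prod_map_toMultiset {σ M : Type*} [CommMonoid M] (m : σ →₀ ℕ)
    (g : σ → M) : (m.prod fun i k => g i ^ k) = (m.toMultiset.map g).prod := by
  rw [Finsupp.toMultiset_map, Finsupp.prod_toMultiset,
    Finsupp.prod_mapDomain_index (fun _ => pow_zero _) fun _ _ _ => pow_add _ _ _]

theorem volume_le_mul_of_forall_volume_slice_le {m : ℕ} (i : Fin (m + 1))
    {s : Set (Fin (m + 1) → ℝ)} (hs : MeasurableSet s) {P : Set (Fin m → ℝ)}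
    (hP : MeasurableSet P) (hsP : ∀ x ∈ s, i.removeNth x ∈ P) {δ : ℝ≥0∞}
    (hδ : ∀ y, volume {t : ℝ | i.insertNth t y ∈ s} ≤ δ) :
    volume s ≤ δ * volume P := by
  set e := MeasurableEquiv.piFinSuccAbove (fun _ : Fin (m + 1) => ℝ) i
  have he : MeasurePreserving e.symm (volume.prod volume) volume :=
    (volume_preserving_piFinSuccAbove (fun _ : Fin (m + 1) => ℝ) i).symm
  have hslice : ∀ y, (fun t => (t, y)) ⁻¹' (e.symm ⁻¹' s) = {t : ℝ | i.insertNth t y ∈ s} := by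
    intro y; ext t; simp [e, MeasurableEquiv.piFinSuccAbove_symm_apply, Fin.insertNthEquiv]
  rw [← he.measure_preimage hs.nullMeasurableSet, Measure.prod_apply_symm (e.symm.measurable hs)]
  calc ∫⁻ y, volume ((fun t => (t, y)) ⁻¹' (e.symm ⁻¹' s))
      ≤ ∫⁻ y, P.indicator (fun _ => δ) y := by
        refine lintegral_mono fun y => ?_
        rw [hslice]
        by_cases hy : y ∈ P
        · simpa [hy] using hδ y
        · have : {t : ℝ | i.insertNth t y ∈ s} = ∅ :=
            Set.eq_empty_of_forall_notMem fun t ht => hy (by simpa using hsP _ ht)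
          simp [this]
    _ = δ * volume P := lintegral_indicator_const hP δ

namespace MvPolynomial

variable {σ R : Type*} [CommSemiring R]

noncomputable def restrictToLine (F : MvPolynomial σ R) (a b : σ → R) : Polynomial R :=
  aeval (fun j => Polynomial.C (b j) * Polynomial.X + Polynomial.C (a j)) F

theorem eval_restrictToLine (F : MvPolynomial σ R) (a b : σ → R) (t : R) :
    (F.restrictToLine a b).eval t = eval (a + t • b) F := by
  rw [restrictToLine, ← Polynomial.coe_aeval_eq_eval, ← AlgHom.comp_apply, comp_aeval,
    aeval_eq_eval]
  congr 2
  funext j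
  simp only [map_add, map_mul, Polynomial.aeval_C, Polynomial.aeval_X, Pi.add_apply,
    Pi.smul_apply, smul_eq_mul, Algebra.algebraMap_self, RingHom.id_apply]
  ring

theorem natDegree_restrictToLine_le (F : MvPolynomial σ R) (a b : σ → R) :
    (F.restrictToLine a b).natDegree ≤ F.totalDegree :=
  (aeval_natDegree_le F le_rfl _ fun _ => Polynomial.natDegree_linear_le).trans_eq (mul_one _)

theorem coeff_restrictToLine_monomial {d : ℕ} (m : σ →₀ ℕ) (hm : m.degree ≤ d) (c : R)
    (a b : σ → R) :
    ((monomial m c).restrictToLine a b).coeff d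
      = eval b (homogeneousComponent d (monomial m c)) := by
  rw [homogeneousComponent_of_mem (isHomogeneous_monomial c rfl)]
  split_ifs with hmd
  · set g : σ → Polynomial R := fun j => Polynomial.C (b j) * Polynomial.X + Polynomial.C (a j)
    have hcard : Multiset.card (m.toMultiset.map g) * 1 = d := by
      rw [mul_one, Multiset.card_map, Finsupp.card_toMultiset, hmd]; rfl
    rw [restrictToLine, aeval_monomial, eval_monomial, Polynomial.algebraMap_eq,
      Polynomial.coeff_C_mul, Finsupp.prod_pow_eq_prod_map_toMultiset, ← hcard,
      Polynomial.coeff_multiset_prod_of_natDegree_le _ _ ?_, Multiset.map_map,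
      Finsupp.prod_pow_eq_prod_map_toMultiset]
    · simp
    · simp only [Multiset.mem_map]
      rintro _ ⟨j, _, rfl⟩
      exact Polynomial.natDegree_linear_le
  · refine Polynomial.coeff_eq_zero_of_natDegree_lt ?_
    calc _ ≤ (monomial m c).totalDegree := natDegree_restrictToLine_le _ a b
      _ ≤ m.degree := totalDegree_monomial_le m c
      _ < d := lt_of_le_of_ne hm (Ne.symm hmd)

theorem coeff_restrictToLine_of_totalDegree_le {F : MvPolynomial σ R} {d : ℕ}
    (hF : F.totalDegree ≤ d) (a b : σ → R) :
    (F.restrictToLine a b).coeff d = eval b (homogeneousComponent d F) := by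
  conv_lhs => rw [F.as_sum]
  conv_rhs => rw [F.as_sum]
  simp only [restrictToLine, map_sum, Polynomial.finsetSum_coeff]
  refine Finset.sum_congr rfl fun m hm => ?_
  exact coeff_restrictToLine_monomial m ((le_totalDegree hm).trans hF) _ a b

theorem IsHomogeneous.eval_zero {φ : MvPolynomial σ R} {n : ℕ} (hφ : φ.IsHomogeneous n)
    (hn : n ≠ 0) : eval 0 φ = 0 := by
  rw [MvPolynomial.eval_zero, constantCoeff_eq]
  exact hφ.coeff_eq_zero (by simpa using hn.symm)

theorem homogeneousComponent_totalDegree_ne_zero {φ : MvPolynomial σ R} (hφ : φ ≠ 0) :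
    homogeneousComponent φ.totalDegree φ ≠ 0 := by
  obtain ⟨m, hm, hmax⟩ := φ.support.exists_mem_eq_sup (support_nonempty.mpr hφ) Finsupp.degree
  have hmdeg : m.degree = φ.totalDegree := by rw [totalDegree, ← hmax]; rfl
  intro h0
  have := congr_arg (coeff m) h0
  rw [coeff_homogeneousComponent, if_pos hmdeg, coeff_zero] at this
  exact mem_support_iff.mp hm this

theorem volume_abs_eval_line_lt_le (F : MvPolynomial σ ℝ) (a b : σ → ℝ)
    {r : ℝ} (hr : 0 ≤ r) :
    volume {t : ℝ | |eval (a + t • b) F|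
        < |eval b (homogeneousComponent F.totalDegree F)| * r ^ F.totalDegree}
      ≤ ENNReal.ofReal (2 * F.totalDegree * r) := by
  simpa only [eval_restrictToLine, coeff_restrictToLine_of_totalDegree_le le_rfl] using
    (F.restrictToLine a b).volume_abs_eval_lt_coeff_le (natDegree_restrictToLine_le F a b) hr

theorem exists_volume_sublevel_le {n : ℕ} (F : MvPolynomial (Fin n) ℝ)
    {v : Fin n → ℝ} {i : Fin n} (hvi : v i ≠ 0) {K : Set (Fin n → ℝ)} (hK : IsBounded K) :
    ∃ C, ∀ r, 0 ≤ r → volume {x ∈ K | |eval x F|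
        < |eval v (homogeneousComponent F.totalDegree F)| * r ^ F.totalDegree}
      ≤ ENNReal.ofReal (C * r) := by
  obtain _ | m := n
  · exact i.elim0
  obtain ⟨R, hKR⟩ := hK.subset_closedBall 0
  set A := replaceSingleEquiv v i hvi
  set P := i.removeNth '' (A.symm '' Metric.closedBall 0 R)
  have hP : IsCompact P :=
    ((isCompact_closedBall 0 R).image (LinearMap.continuous_of_finiteDimensional _)).image
      (continuous_pi fun _ => continuous_apply _)
  have hA_line : ∀ t y, A (i.insertNth t y) = A (i.insertNth 0 y) + t • v := by
    intro t y
    rw [← replaceSingleEquiv_single v i hvi, ← map_add, ← Fin.insertNth_zero_right,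
      ← Fin.insertNth_add, zero_add, add_zero]
  refine ⟨|LinearMap.det (A : (Fin (m + 1) → ℝ) →ₗ[ℝ] _)| * (2 * F.totalDegree) *
    (volume P).toReal, fun r hr => ?_⟩
  set S := {x ∈ Metric.closedBall 0 R | |eval x F|
    < |eval v (homogeneousComponent F.totalDegree F)| * r ^ F.totalDegree}
  have hS : MeasurableSet S := measurableSet_closedBall.inter
    (measurableSet_lt (continuous_eval F).abs.measurable measurable_const)
  have hslices : volume (A ⁻¹' S) ≤ ENNReal.ofReal (2 * F.totalDegree * r) * volume P := by
    refine volume_le_mul_of_forall_volume_slice_le i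
      (hS.preimage (LinearMap.continuous_of_finiteDimensional _).measurable) hP.measurableSet
      (fun x hx => ⟨x, ⟨A x, hx.1, A.symm_apply_apply x⟩, rfl⟩) fun y => ?_
    refine (measure_mono fun t ht => ?_).trans
      (F.volume_abs_eval_line_lt_le (A (i.insertNth 0 y)) v hr)
    simpa [← hA_line] using ht.2
  calc volume {x ∈ K | |eval x F|
        < |eval v (homogeneousComponent F.totalDegree F)| * r ^ F.totalDegree}
      ≤ volume S := measure_mono fun x hx => ⟨hKR hx.1, hx.2⟩
    _ = ENNReal.ofReal |LinearMap.det (A : (Fin (m + 1) → ℝ) →ₗ[ℝ] _)| * volume (A ⁻¹' S) := by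
      have h := Measure.addHaar_preimage_linearEquiv volume A.symm (A ⁻¹' S)
      rwa [LinearEquiv.symm_symm, show A.symm ⁻¹' (A ⁻¹' S) = S by ext; simp] at h
    _ ≤ ENNReal.ofReal |LinearMap.det (A : (Fin (m + 1) → ℝ) →ₗ[ℝ] _)|
        * (ENNReal.ofReal (2 * F.totalDegree * r) * volume P) := by gcongr
    _ = _ := by
      set VP := (volume P).toReal
      rw [show volume P = ENNReal.ofReal VP from (ENNReal.ofReal_toReal hP.measure_lt_top.ne).symm,
        ← ENNReal.ofReal_mul (by positivity), ← ENNReal.ofReal_mul (by positivity)]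
      ring_nf

end MvPolynomial

theorem stmt13_general (n : ℕ) (F : MvPolynomial (Fin n) ℝ) (hF : F ≠ 0) (dbar : ℕ)
    (hdeg : F.totalDegree = dbar) (hd : 1 ≤ dbar)
    (K : Set (Fin n → ℝ)) (hK : Bornology.IsBounded K) :
    ∃ C > 0, ∀ ε : ℝ, 0 < ε → ε ≤ 1 →
      MeasureTheory.volume {x ∈ K | |MvPolynomial.eval x F| < ε}
        ≤ ENNReal.ofReal (C * ε ^ ((1:ℝ) / dbar)) := by
  subst hdeg
  set Fd := MvPolynomial.homogeneousComponent F.totalDegree F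
  have hFd : Fd.IsHomogeneous F.totalDegree := MvPolynomial.homogeneousComponent_isHomogeneous _ F
  obtain ⟨v, hv⟩ : ∃ v, MvPolynomial.eval v Fd ≠ 0 := by
    by_contra! h
    exact MvPolynomial.homogeneousComponent_totalDegree_ne_zero hF
      (hFd.eq_zero_of_forall_eval_eq_zero h)
  obtain ⟨i, hvi⟩ : ∃ i, v i ≠ 0 := by
    by_contra! h
    rw [show v = 0 from funext h, hFd.eval_zero (by omega)] at hv
    exact hv rfl
  obtain ⟨C, hC⟩ := F.exists_volume_sublevel_le hvi hK
  set c := |MvPolynomial.eval v Fd|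
  have hc : 0 < c := abs_pos.mpr hv
  refine ⟨max C 1 / c ^ ((1:ℝ) / F.totalDegree), by positivity, fun ε hε _ => ?_⟩
  set r := (ε / c) ^ ((1:ℝ) / F.totalDegree)
  have hr : c * r ^ F.totalDegree = ε := by
    rw [← Real.rpow_natCast, ← Real.rpow_mul (by positivity), one_div_mul_cancel (by positivity),
      Real.rpow_one, mul_div_cancel₀ _ hc.ne']
  calc volume {x ∈ K | |MvPolynomial.eval x F| < ε}
      ≤ ENNReal.ofReal (C * r) := hr ▸ hC r (by positivity)
    _ ≤ ENNReal.ofReal (max C 1 / c ^ ((1:ℝ) / F.totalDegree) * ε ^ ((1:ℝ) / F.totalDegree)) := by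
      refine ENNReal.ofReal_le_ofReal ?_
      rw [show r = _ from Real.div_rpow hε.le hc.le _, div_mul_eq_mul_div, mul_div_assoc]
      gcongr
      exact le_max_left C 1

theorem stmt13 (n : ℕ) (F : MvPolynomial (Fin n) ℝ) (hF : F ≠ 0) (dbar : ℕ)
    (hdeg : F.totalDegree = dbar) (hd : 1 ≤ dbar)
    (K : Set (Fin n → ℝ)) (hK : Bornology.IsBounded K) (hKm : MeasurableSet K) :
    ∃ C > 0, ∀ ε : ℝ, 0 < ε → ε ≤ 1 →
      MeasureTheory.volume {x ∈ K | |MvPolynomial.eval x F| < ε}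
        ≤ ENNReal.ofReal (C * ε ^ ((1:ℝ) / dbar)) :=
  stmt13_general n F hF dbar hdeg hd K hK
end

section
/- Let $\xi^1, \xi^2$ be independent uniform random points in the integer ball $\mathbf{B}(R) \subset \mathbb{Z}^d$, $d \geq 2$, $R \geq 1$. Then $\mathbb{P}(|\xi^1| = |\xi^2|) \leq C(d) R^{-1}$. -/
open Finset

noncomputable def intCube (d N : ℕ) : Finset (Fin d → ℤ) :=
  Fintype.piFinset fun _ => Icc (-(N : ℤ)) N

section intCube

variable {d N : ℕ}

theorem mem_intCube {a : Fin d → ℤ} : a ∈ intCube d N ↔ ∀ i, |a i| ≤ N := by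
  simp only [intCube, Fintype.mem_piFinset, mem_Icc, abs_le]

theorem card_intCube : (intCube d N).card = (2 * N + 1) ^ d := by
  simp only [intCube, Fintype.card_piFinset, Int.card_Icc, prod_const, card_univ,
    Fintype.card_fin]
  congr 1
  omega

end intCube

section znorm

variable {d : ℕ}

theorem znorm_eq_znorm_iff {a b : Fin d → ℤ} :
    znorm a = znorm b ↔ ∑ i, a i ^ 2 = ∑ i, b i ^ 2 := by
  rw [znorm, znorm, Real.sqrt_inj (by positivity) (by positivity)]
  exact_mod_cast Iff.rfl

theorem abs_coord_le_znorm (a : Fin d → ℤ) (i : Fin d) : |(a i : ℝ)| ≤ znorm a :=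
  Real.abs_le_sqrt <|
    single_le_sum (f := fun j => ((a j : ℝ)) ^ 2) (fun _ _ => sq_nonneg _) (mem_univ i)

theorem mem_intCube_ceil_of_znorm_le {a : Fin d → ℤ} {R : ℝ} (h : znorm a ≤ R) :
    a ∈ intCube d ⌈R⌉₊ := by
  refine mem_intCube.2 fun i => ?_
  have : |(a i : ℝ)| ≤ ⌈R⌉₊ := (abs_coord_le_znorm a i).trans (h.trans (Nat.le_ceil R))
  exact_mod_cast this

theorem znorm_le_of_mem_intCube_floor {a : Fin d → ℤ} {R : ℝ} (hR : 0 ≤ R)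
    (ha : a ∈ intCube d ⌊R / d⌋₊) : znorm a ≤ R := by
  rcases Nat.eq_zero_or_pos d with rfl | hd
  · simpa [znorm] using hR
  have hcoord : ∀ i, ((a i : ℝ)) ^ 2 ≤ (R / d) ^ 2 := fun i => by
    have h : |(a i : ℝ)| ≤ ⌊R / d⌋₊ := by exact_mod_cast mem_intCube.1 ha i
    rw [← sq_abs]
    gcongr
    exact h.trans (Nat.floor_le (by positivity))
  refine Real.sqrt_le_left hR |>.2 ?_
  calc ∑ i, ((a i : ℝ)) ^ 2 ≤ ∑ _i : Fin d, (R / d) ^ 2 := sum_le_sum fun i _ => hcoord i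
    _ = R ^ 2 / d := by
      rw [sum_const, card_univ, Fintype.card_fin, nsmul_eq_mul]
      field_simp
    _ ≤ R ^ 2 := div_le_self (sq_nonneg R) (by exact_mod_cast hd)

theorem finite_setOf_znorm_le (R : ℝ) : {a : Fin d → ℤ | znorm a ≤ R}.Finite :=
  (intCube d ⌈R⌉₊).finite_toSet.subset fun _ => mem_intCube_ceil_of_znorm_le

end znorm

theorem eq_of_sum_sq_eq_of_tail_eq {k : ℕ} {a b : Fin (k + 1) → ℤ}
    (hsum : ∑ i, a i ^ 2 = ∑ i, b i ^ 2) (htail : Fin.tail a = Fin.tail b)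
    (hsign : 0 ≤ a 0 ↔ 0 ≤ b 0) : a = b := by
  have hrest : ∀ i : Fin k, a i.succ = b i.succ := congrFun htail
  have hsq : a 0 ^ 2 = b 0 ^ 2 := by
    simpa only [Fin.sum_univ_succ, hrest, add_left_inj] using hsum
  have h0 : a 0 = b 0 := by
    rcases sq_eq_sq_iff_eq_or_eq_neg.1 hsq with h | h <;> omega
  rw [← Fin.cons_self_tail a, ← Fin.cons_self_tail b, h0, htail]

theorem ncard_equal_znorm_pairs_le (k : ℕ) (R : ℝ) :
    {p : (Fin (k + 1) → ℤ) × (Fin (k + 1) → ℤ) |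
        znorm p.1 ≤ R ∧ znorm p.2 ≤ R ∧ znorm p.1 = znorm p.2}.ncard
      ≤ 2 * (2 * ⌈R⌉₊ + 1) ^ (2 * k + 1) := by
  set S := {p : (Fin (k + 1) → ℤ) × (Fin (k + 1) → ℤ) |
    znorm p.1 ≤ R ∧ znorm p.2 ≤ R ∧ znorm p.1 = znorm p.2}
  set N := ⌈R⌉₊
  let f : (Fin (k + 1) → ℤ) × (Fin (k + 1) → ℤ) → (Fin (k + 1) → ℤ) × (Fin k → ℤ) × Bool :=
    fun p => (p.1, Fin.tail p.2, decide (0 ≤ p.2 0))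
  have hmaps : ∀ p ∈ S,
      f p ∈ ((intCube (k + 1) N ×ˢ intCube k N ×ˢ (univ : Finset Bool) : Finset _) : Set _) := by
    rintro ⟨a, b⟩ ⟨ha, hb, -⟩
    have hb' := mem_intCube.1 (mem_intCube_ceil_of_znorm_le hb)
    exact mem_product.2 ⟨mem_intCube_ceil_of_znorm_le ha,
      mem_product.2 ⟨mem_intCube.2 fun i => hb' i.succ, mem_univ _⟩⟩
  have hinj : Set.InjOn f S := by
    rintro ⟨a, b⟩ ⟨-, -, hab⟩ ⟨a', b'⟩ ⟨-, -, hab'⟩ hf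
    simp only [f, Prod.mk.injEq, decide_eq_decide] at hf
    obtain ⟨rfl, htail, hsign⟩ := hf
    refine Prod.ext rfl (eq_of_sum_sq_eq_of_tail_eq ?_ htail hsign)
    exact znorm_eq_znorm_iff.1 (hab.symm.trans hab')
  calc S.ncard ≤ _ := Set.ncard_le_ncard_of_injOn f hmaps hinj
    _ = 2 * (2 * N + 1) ^ (2 * k + 1) := by
      rw [Set.ncard_coe_finset, card_product, card_product, card_intCube, card_intCube,
        card_univ, Fintype.card_bool]
      ring

theorem ncard_equal_znorm_pairs_le_of_one_le (k : ℕ) {R : ℝ} (hR : 1 ≤ R) :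
    ({p : (Fin (k + 1) → ℤ) × (Fin (k + 1) → ℤ) |
        znorm p.1 ≤ R ∧ znorm p.2 ≤ R ∧ znorm p.1 = znorm p.2}.ncard : ℝ)
      ≤ 2 * (5 * R) ^ (2 * k + 1) := by
  have hside : (2 * ⌈R⌉₊ + 1 : ℝ) ≤ 5 * R := by
    linarith [Nat.ceil_lt_add_one (zero_le_one.trans hR)]
  calc _ ≤ ((2 * (2 * ⌈R⌉₊ + 1) ^ (2 * k + 1) : ℕ) : ℝ) := by
        exact_mod_cast ncard_equal_znorm_pairs_le k R
    _ ≤ 2 * (5 * R) ^ (2 * k + 1) := by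
      push_cast
      gcongr

theorem pow_le_ncard_setOf_znorm_le (d : ℕ) {R : ℝ} (hR : 0 ≤ R) :
    (R / d) ^ d ≤ ({a : Fin d → ℤ | znorm a ≤ R}.ncard : ℝ) := by
  have hcube : (2 * ⌊R / d⌋₊ + 1) ^ d ≤ {a : Fin d → ℤ | znorm a ≤ R}.ncard := by
    rw [← card_intCube, ← Set.ncard_coe_finset]
    exact Set.ncard_le_ncard (fun _ => znorm_le_of_mem_intCube_floor hR)
      (finite_setOf_znorm_le R)
  have hside : R / d ≤ 2 * ⌊R / d⌋₊ + 1 := by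
    linarith [Nat.lt_floor_add_one (R / d), Nat.cast_nonneg (α := ℝ) ⌊R / d⌋₊]
  calc (R / d) ^ d ≤ (2 * ⌊R / d⌋₊ + 1 : ℝ) ^ d := by gcongr
    _ ≤ _ := by exact_mod_cast hcube

theorem stmt15 (d : ℕ) (hd : 2 ≤ d) :
    ∃ C > 0, ∀ R : ℝ, 1 ≤ R →
      ({p : (Fin d → ℤ) × (Fin d → ℤ) |
          znorm p.1 ≤ R ∧ znorm p.2 ≤ R ∧ znorm p.1 = znorm p.2}.ncard : ℝ) /
        (({a : Fin d → ℤ | znorm a ≤ R}.ncard : ℝ)) ^ 2 ≤ C * R⁻¹ := by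
  obtain ⟨k, rfl⟩ : ∃ k, d = k + 1 := ⟨d - 1, by omega⟩
  refine ⟨2 * 5 ^ (2 * k + 1) * ((k : ℝ) + 1) ^ (2 * k + 2), by positivity, fun R hR => ?_⟩
  have hR0 : 0 < R := zero_lt_one.trans_le hR
  have hball := pow_le_ncard_setOf_znorm_le (k + 1) hR0.le
  push_cast at hball
  calc _ ≤ 2 * (5 * R) ^ (2 * k + 1) / ((R / (k + 1)) ^ (k + 1)) ^ 2 := by
        gcongr
        exact ncard_equal_znorm_pairs_le_of_one_le k hR
    _ = _ := by
      rw [← pow_mul, div_pow, mul_pow]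
      field_simp
      ring
end

section
/- Let $m \in [1,2]$, $\lambda_1 = \sqrt{1+m}$, $\lambda_2 = \sqrt{4+m}$, $\rho > 0$, and set $\alpha = \frac{6\rho}{4\pi^2 \lambda_1 \lambda_2}$, $\beta = \frac{3\rho}{4\pi^2 \lambda_1}\left(\frac{1}{\lambda_1} - \frac{2}{\lambda_2}\right)$, $\gamma = \frac{3\rho}{4\pi^2 \lambda_2}\left(\frac{1}{\lambda_2} - \frac{2}{\lambda_1}\right)$. Then $(\beta + \gamma)^2 - 4\alpha^2 < 0$. -/
theorem stmt18 (m ρ : ℝ) (hm : m ∈ Set.Icc (1:ℝ) 2) (hρ : 0 < ρ)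
    (lam₁ lam₂ α β γ : ℝ)
    (h₁ : lam₁ = Real.sqrt (1 + m)) (h₂ : lam₂ = Real.sqrt (4 + m))
    (hα : α = 6 * ρ / (4 * Real.pi ^ 2 * lam₁ * lam₂))
    (hβ : β = 3 * ρ / (4 * Real.pi ^ 2 * lam₁) * (1 / lam₁ - 2 / lam₂))
    (hγ : γ = 3 * ρ / (4 * Real.pi ^ 2 * lam₂) * (1 / lam₂ - 2 / lam₁)) :
    (β + γ) ^ 2 - 4 * α ^ 2 < 0 := by
  obtain ⟨hm1, hm2⟩ := hm
  have hπ : 0 < Real.pi := Real.pi_pos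
  have h1p : (0:ℝ) < 1 + m := by linarith
  have h4p : (0:ℝ) < 4 + m := by linarith
  have hl1 : 0 < lam₁ := by rw [h₁]; exact Real.sqrt_pos.mpr h1p
  have hl2 : 0 < lam₂ := by rw [h₂]; exact Real.sqrt_pos.mpr h4p
  have hs1 : lam₁ ^ 2 = 1 + m := by rw [h₁, Real.sq_sqrt h1p.le]
  have hs2 : lam₂ ^ 2 = 4 + m := by rw [h₂, Real.sq_sqrt h4p.le]
  have hprod : 3 < lam₁ * lam₂ := by nlinarith [mul_pos hl1 hl2]
  have e1 : β + γ + 2 * α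
      = 3 * ρ / (4 * Real.pi ^ 2) * ((lam₁ ^ 2 + lam₂ ^ 2) / (lam₁ ^ 2 * lam₂ ^ 2)) := by
    rw [hα, hβ, hγ]
    field_simp
    ring
  have e2 : 2 * α - (β + γ)
      = 3 * ρ / (4 * Real.pi ^ 2) *
        ((8 * (lam₁ * lam₂) - lam₁ ^ 2 - lam₂ ^ 2) / (lam₁ ^ 2 * lam₂ ^ 2)) := by
    rw [hα, hβ, hγ]
    field_simp
    ring
  have p1 : 0 < β + γ + 2 * α := by
    rw [e1]; positivity
  have p2 : 0 < 2 * α - (β + γ) := by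
    rw [e2]
    have hnum : 0 < 8 * (lam₁ * lam₂) - lam₁ ^ 2 - lam₂ ^ 2 := by nlinarith
    positivity
  nlinarith [mul_pos p1 p2]
end
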